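/- Let S ⊆ ℝ, let g : ℝ → ℝ, and let u : ℝ → ℝ be twice differentiable on S and satisfy the ordinary differential equation u''(z) + z(1 − 2g(z))u'(z) − u(z) = 0 for every z ∈ S. Define V(t,x) := √(1−t) · u( x/√(1−t) ) for t < 1 and x ∈ ℝ. Then for every t < 1 and x ∈ ℝ with x/√(1−t) ∈ S, V satisfies the partial differential equation ∂_t V(t,x) + (1/2) ∂²_{xx} V(t,x) − x · ( g(x/√(1−t)) / (1−t) ) · ∂_x V(t,x) = 0. -/

import Mathlib

open Real

/-!
Put `z = x / √(1 - t)`. Then `∂ₜ z = z / (2 (1 - t))` and `∂ₓ z = 1 / √(1 - t)`, so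
`∂ₜ V = (z u'(z) - u(z)) / (2 √(1 - t))`, `∂ₓ V = u'(z)` and `∂²ₓₓ V = u''(z) / √(1 - t)`.
Since `x / (1 - t) = z / √(1 - t)`, the left-hand side of the PDE is
`(u'' + z (1 - 2 g) u' - u)(z) / (2 √(1 - t))`, which vanishes by the ODE.
-/

section ScaledComposition

variable {𝕜 : Type*} [NontriviallyNormedField 𝕜] {u : 𝕜 → 𝕜} {d c x : 𝕜}

theorem HasDerivAt.comp_div_const (hu : HasDerivAt u d (x / c)) :
    HasDerivAt (fun y => u (y / c)) (d / c) x :=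
  (hu.comp x ((hasDerivAt_id' x).div_const c)).congr_deriv (mul_one_div d c)

theorem HasDerivAt.const_mul_comp_div_const (hc : c ≠ 0) (hu : HasDerivAt u d (x / c)) :
    HasDerivAt (fun y => c * u (y / c)) d x := by
  simpa [mul_div_cancel₀ d hc] using hu.comp_div_const.const_mul c

end ScaledComposition

theorem hasDerivAt_sqrt_one_sub {t : ℝ} (ht : t < 1) :
    HasDerivAt (fun s => √(1 - s)) (-1 / (2 * √(1 - t))) t :=
  ((hasDerivAt_id t).const_sub 1).sqrt (sub_ne_zero.2 ht.ne')

theorem hasDerivAt_div_sqrt_one_sub (x : ℝ) {t : ℝ} (ht : t < 1) :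
    HasDerivAt (fun s => x / √(1 - s)) (x / √(1 - t) / (2 * (1 - t))) t := by
  have hs : 0 < √(1 - t) := sqrt_pos.2 (sub_pos.2 ht)
  refine ((hasDerivAt_const t x).div (hasDerivAt_sqrt_one_sub ht) hs.ne').congr_deriv ?_
  have hsq : √(1 - t) ^ 2 = 1 - t := sq_sqrt (sub_pos.2 ht).le
  have h1t : 1 - t ≠ 0 := sub_ne_zero.2 ht.ne'
  field_simp
  linear_combination -x * hsq

theorem hasDerivAt_sqrt_one_sub_mul_comp_div_sqrt_one_sub {u : ℝ → ℝ} {d x t : ℝ} (ht : t < 1)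
    (hu : HasDerivAt u d (x / √(1 - t))) :
    HasDerivAt (fun s => √(1 - s) * u (x / √(1 - s)))
      ((x / √(1 - t) * d - u (x / √(1 - t))) / (2 * √(1 - t))) t := by
  have hs : 0 < √(1 - t) := sqrt_pos.2 (sub_pos.2 ht)
  refine ((hasDerivAt_sqrt_one_sub ht).mul
    (hu.comp t (hasDerivAt_div_sqrt_one_sub x ht))).congr_deriv ?_
  have hsq : √(1 - t) ^ 2 = 1 - t := sq_sqrt (sub_pos.2 ht).le
  have h1t : 1 - t ≠ 0 := sub_ne_zero.2 ht.ne'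
  simp only [Function.comp_apply]
  field_simp
  linear_combination x * d * hsq

theorem scaling_reduction_pde
    (S : Set ℝ) (g u u' u'' : ℝ → ℝ)
    (hu : ∀ z ∈ S, HasDerivAt u (u' z) z)
    (hu' : ∀ z ∈ S, HasDerivAt u' (u'' z) z)
    (hode : ∀ z ∈ S, u'' z + z * (1 - 2 * g z) * u' z - u z = 0)
    (t x : ℝ) (ht : t < 1) (hmem : x / Real.sqrt (1 - t) ∈ S) :
    ∃ Vt Vx Vxx : ℝ,
      HasDerivAt (fun s : ℝ => Real.sqrt (1 - s) * u (x / Real.sqrt (1 - s))) Vt t ∧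
      HasDerivAt (fun y : ℝ => Real.sqrt (1 - t) * u (y / Real.sqrt (1 - t))) Vx x ∧
      HasDerivAt (fun y : ℝ => u' (y / Real.sqrt (1 - t))) Vxx x ∧
      Vt + (1/2) * Vxx - x * (g (x / Real.sqrt (1 - t)) / (1 - t)) * Vx = 0 := by
  have hs : 0 < √(1 - t) := sqrt_pos.2 (sub_pos.2 ht)
  have hsq : √(1 - t) ^ 2 = 1 - t := sq_sqrt (sub_pos.2 ht).le
  have h1t : 1 - t ≠ 0 := sub_ne_zero.2 ht.ne'
  refine ⟨_, _, _, hasDerivAt_sqrt_one_sub_mul_comp_div_sqrt_one_sub ht (hu _ hmem),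
    (hu _ hmem).const_mul_comp_div_const hs.ne', (hu' _ hmem).comp_div_const, ?_⟩
  set z := x / √(1 - t)
  have hx : x = z * √(1 - t) := (div_mul_cancel₀ x hs.ne').symm
  calc _ = (u'' z + z * (1 - 2 * g z) * u' z - u z) / (2 * √(1 - t)) := by
        rw [hx]
        field_simp
        linear_combination -2 * z * u' z * g z * hsq
    _ = 0 := by rw [hode z hmem, zero_div]
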